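/- arXiv:0807.4392 — 4 statements merged into one kernel-verified Lean document; each statement's English description precedes it below -/
import Mathlib

section
/- Let w : ℕ → (0,∞) be decreasing with w(1) = 1, w(k) → 0 and ∑ₖ w(k) = ∞, let 0 < p < n, and set Ψ(N) = (∑_{k=1}^N w(k))^{n/p}. Suppose α : ℕ → [0,∞) is decreasing and there is a constant M with ∑_{k=1}^N α(k) ≤ M·Ψ(N) for all N. Then for every decreasing nonnegative sequence x and every N, ∑_{k=1}^N α(k) x(k)^n ≤ M · ( ∑_{k=1}^N w(k) x(k)^p )^{n/p}. -/
/-!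
Write `A`, `W`, `S` for the partial sums of `α`, `w` and `w k * x k ^ p`, and `q = n / p ≥ 1`.
Summation by parts against the decreasing sequence `x k ^ n` turns the hypothesis `A N ≤ M W N ^ q`
into `∑ α k x k ^ n ≤ M ∑ (W (k+1) ^ q - W k ^ q) (x k ^ p) ^ q`. The last sum is at most `S N ^ q`
by induction on `N`: since `W N x N ^ p ≤ S N`, the step only needs that
`s ↦ (s + c) ^ q - s ^ q` is increasing on `[0, ∞)` for `q ≥ 1`.
-/

open Finset

lemma rpow_add_sub_rpow_le_rpow_add_sub_rpow {q a b c : ℝ} (hq : 1 ≤ q) (ha : 0 ≤ a) (hab : a ≤ b)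
    (hc : 0 ≤ c) : (a + c) ^ q - a ^ q ≤ (b + c) ^ q - b ^ q := by
  have hderiv : ∀ s : ℝ, HasDerivAt (fun s : ℝ => (s + c) ^ q - s ^ q)
      (q * (s + c) ^ (q - 1) * 1 - q * s ^ (q - 1)) s := fun s =>
    ((Real.hasDerivAt_rpow_const (Or.inr hq)).comp s ((hasDerivAt_id s).add_const c)).sub
      (Real.hasDerivAt_rpow_const (Or.inr hq))
  have hmono : MonotoneOn (fun s : ℝ => (s + c) ^ q - s ^ q) (Set.Ici 0) := by
    refine monotoneOn_of_deriv_nonneg (convex_Ici 0)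
      (fun s _ => (hderiv s).continuousAt.continuousWithinAt)
      (fun s _ => (hderiv s).differentiableAt.differentiableWithinAt) fun s hs => ?_
    rw [interior_Ici] at hs
    have hpow : s ^ (q - 1) ≤ (s + c) ^ (q - 1) :=
      Real.rpow_le_rpow (le_of_lt hs) (by linarith) (by linarith)
    rw [(hderiv s).deriv]
    nlinarith
  exact hmono ha (ha.trans hab) hab

lemma sum_range_mul_eq_by_parts (a s : ℕ → ℝ) (N : ℕ) :
    ∑ k ∈ range N, a k * s k
      = ∑ k ∈ range N, (∑ j ∈ range (k + 1), a j) * (s k - s (k + 1))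
        + (∑ j ∈ range N, a j) * s N := by
  induction N with
  | zero => simp
  | succ N ih =>
    simp only [sum_range_succ _ N, ih]
    ring

lemma sum_range_mul_le_of_partialSums_le {a b s : ℕ → ℝ} (hs : Antitone s) (hs0 : ∀ k, 0 ≤ s k)
    (hab : ∀ N, ∑ k ∈ range N, a k ≤ ∑ k ∈ range N, b k) (N : ℕ) :
    ∑ k ∈ range N, a k * s k ≤ ∑ k ∈ range N, b k * s k := by
  rw [← sub_nonpos, ← sum_sub_distrib]
  simp only [← sub_mul]
  rw [sum_range_mul_eq_by_parts]
  refine add_nonpos (sum_nonpos fun k _ => ?_) ?_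
  · exact mul_nonpos_of_nonpos_of_nonneg (by simpa only [sum_sub_distrib, sub_nonpos] using hab _)
      (sub_nonneg.mpr (hs k.le_succ))
  · exact mul_nonpos_of_nonpos_of_nonneg (by simpa only [sum_sub_distrib, sub_nonpos] using hab N)
      (hs0 N)

lemma sum_range_partialSum_rpow_sub_mul_rpow_le {w t : ℕ → ℝ} (hw : ∀ k, 0 ≤ w k)
    (ht : Antitone t) (ht0 : ∀ k, 0 ≤ t k) {q : ℝ} (hq : 1 ≤ q) (N : ℕ) :
    ∑ k ∈ range N, ((∑ j ∈ range (k + 1), w j) ^ q - (∑ j ∈ range k, w j) ^ q) * t k ^ q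
      ≤ (∑ k ∈ range N, w k * t k) ^ q := by
  induction N with
  | zero => simp [Real.zero_rpow (by positivity : q ≠ 0)]
  | succ N ih =>
    set W := ∑ j ∈ range N, w j
    set S := ∑ k ∈ range N, w k * t k
    have hW : 0 ≤ W := sum_nonneg fun j _ => hw j
    have hWS : W * t N ≤ S := by
      rw [sum_mul]
      exact sum_le_sum fun k hk => mul_le_mul_of_nonneg_left (ht (mem_range.mp hk).le) (hw k)
    have hstep := rpow_add_sub_rpow_le_rpow_add_sub_rpow hq (mul_nonneg hW (ht0 N)) hWS
      (mul_nonneg (hw N) (ht0 N))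
    rw [← add_mul, Real.mul_rpow (add_nonneg hW (hw N)) (ht0 N), Real.mul_rpow hW (ht0 N),
      ← sub_mul] at hstep
    rw [sum_range_succ, sum_range_succ, sum_range_succ]
    linarith

theorem stmt6_general (w : ℕ → ℝ) (hw : ∀ k, 0 < w k)
    (p : ℝ) (n : ℕ) (hp : 0 < p) (hpn : p < n)
    (α : ℕ → ℝ) (hα0 : ∀ k, 0 ≤ α k) (M : ℝ)
    (hM : ∀ N : ℕ, ∑ k ∈ Finset.range N, α k ≤
        M * (∑ k ∈ Finset.range N, w k) ^ ((n : ℝ) / p)) :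
    ∀ x : ℕ → ℝ, Antitone x → (∀ k, 0 ≤ x k) → ∀ N : ℕ,
      ∑ k ∈ Finset.range N, α k * x k ^ (n : ℝ) ≤
        M * (∑ k ∈ Finset.range N, w k * x k ^ p) ^ ((n : ℝ) / p) := by
  intro x hx hx0 N
  set q : ℝ := (n : ℝ) / p
  have hq : 1 ≤ q := by rw [le_div_iff₀ hp]; linarith
  have hM0 : 0 ≤ M := by
    have h1 := hM 1
    simp only [sum_range_one] at h1
    exact nonneg_of_mul_nonneg_left ((hα0 0).trans h1) (Real.rpow_pos_of_pos (hw 0) q)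
  set t : ℕ → ℝ := fun k => x k ^ p
  have ht0 : ∀ k, 0 ≤ t k := fun k => Real.rpow_nonneg (hx0 k) p
  have ht : Antitone t := fun a b hab => Real.rpow_le_rpow (hx0 b) (hx hab) hp.le
  have hxn : ∀ k, x k ^ (n : ℝ) = t k ^ q := fun k => by
    rw [← Real.rpow_mul (hx0 k), mul_div_cancel₀ _ hp.ne']
  have hmarcinkiewicz : ∀ N, ∑ k ∈ range N, α k ≤
      ∑ k ∈ range N, M * ((∑ j ∈ range (k + 1), w j) ^ q - (∑ j ∈ range k, w j) ^ q) := by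
    intro N
    rw [← mul_sum, sum_range_sub (fun k => (∑ j ∈ range k, w j) ^ q), sum_range_zero,
      Real.zero_rpow (by positivity), sub_zero]
    exact hM N
  calc ∑ k ∈ range N, α k * x k ^ (n : ℝ) = ∑ k ∈ range N, α k * t k ^ q := by simp only [hxn]
    _ ≤ ∑ k ∈ range N, M * ((∑ j ∈ range (k + 1), w j) ^ q - (∑ j ∈ range k, w j) ^ q)
          * t k ^ q :=
      sum_range_mul_le_of_partialSums_le (fun a b hab => Real.rpow_le_rpow (ht0 b) (ht hab)
        (by linarith)) (fun k => Real.rpow_nonneg (ht0 k) q) hmarcinkiewicz N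
    _ = M * ∑ k ∈ range N, ((∑ j ∈ range (k + 1), w j) ^ q - (∑ j ∈ range k, w j) ^ q)
          * t k ^ q := by simp only [mul_sum, mul_assoc]
    _ ≤ M * (∑ k ∈ range N, w k * t k) ^ q := mul_le_mul_of_nonneg_left
      (sum_range_partialSum_rpow_sub_mul_rpow_le (fun k => (hw k).le) ht ht0 hq N) hM0

/-- Forward direction of Theorem 1(b): if `α` is decreasing, nonnegative and satisfies the
Marcinkiewicz condition `∑_{k<N} α(k) ≤ M Ψ(N)` with `Ψ(N) = (∑_{k<N} w(k))^{n/p}`, then for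
every decreasing nonnegative `x` and every `N`,
`∑_{k<N} α(k) x(k)^n ≤ M (∑_{k<N} w(k) x(k)^p)^{n/p}`. (Sequences indexed from `0`.) -/
theorem stmt6 (w : ℕ → ℝ) (hw : ∀ k, 0 < w k) (hwa : Antitone w) (hw1 : w 0 = 1)
    (hw0 : Filter.Tendsto w Filter.atTop (nhds 0)) (hwns : ¬ Summable w)
    (p : ℝ) (n : ℕ) (hp : 0 < p) (hpn : p < n)
    (α : ℕ → ℝ) (hαa : Antitone α) (hα0 : ∀ k, 0 ≤ α k) (M : ℝ)
    (hM : ∀ N : ℕ, ∑ k ∈ Finset.range N, α k ≤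
        M * (∑ k ∈ Finset.range N, w k) ^ ((n : ℝ) / p)) :
    ∀ x : ℕ → ℝ, Antitone x → (∀ k, 0 ≤ x k) → ∀ N : ℕ,
      ∑ k ∈ Finset.range N, α k * x k ^ (n : ℝ) ≤
        M * (∑ k ∈ Finset.range N, w k * x k ^ p) ^ ((n : ℝ) / p) :=
  stmt6_general w hw p n hp hpn α hα0 M hM
end

section
/- Let Ψ : ℕ → (0,∞) be increasing with Ψ(0) = 0. For every N ≥ 1, every decreasing nonnegative sequence x, and every n ≥ 1: Ψ(1)·x(1)^n + ∑_{i=2}^N (Ψ(i) − Ψ(i−1))·x(i)^n ≤ (∑_{k=1}^N w(k)·x(k)^p)^{n/p}, where Ψ(N) = (∑_{k=1}^N w(k))^{n/p}, w is a positive decreasing sequence, and 0 < p ≤ n. -/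
open Finset

lemma convex_diff_mono' {f : ℝ → ℝ} (hf : ConvexOn ℝ (Set.Ici 0) f)
    {a b c : ℝ} (ha : 0 ≤ a) (hab : a ≤ b) (hc : 0 ≤ c) :
    f (a + c) - f a ≤ f (b + c) - f b := by
  rcases eq_or_lt_of_le hc with rfl | hc
  · simp
  have hb : (0:ℝ) ≤ b := ha.trans hab
  have h1 : (f (a + c) - f a) / (a + c - a) ≤ (f (b + c) - f a) / (b + c - a) := by
    apply hf.secant_mono ha (by simp only [Set.mem_Ici]; positivity)
      (by simp only [Set.mem_Ici]; positivity) (lt_add_of_pos_right a hc).ne'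
      (hab.trans_lt (lt_add_of_pos_right b hc)).ne' (by linarith)
  have h2 : (f a - f (b + c)) / (a - (b + c)) ≤ (f b - f (b + c)) / (b - (b + c)) := by
    apply hf.secant_mono (by simp only [Set.mem_Ici]; positivity) ha hb
      (hab.trans_lt (lt_add_of_pos_right b hc)).ne (lt_add_of_pos_right b hc).ne hab
  have e1 : (f a - f (b + c)) / (a - (b + c)) = (f (b + c) - f a) / (b + c - a) := by
    rw [← neg_div_neg_eq]; ring_nf
  have e2 : (f b - f (b + c)) / (b - (b + c)) = (f (b + c) - f b) / c := by
    rw [← neg_div_neg_eq]; ring_nf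
  rw [e1, e2] at h2
  have h3 : (f (a + c) - f a) / c ≤ (f (b + c) - f b) / c := by
    have hd : a + c - a = c := by ring
    rw [hd] at h1
    linarith
  have := (div_le_div_iff_of_pos_right hc).mp h3
  linarith

lemma rpow_diff_mono {r : ℝ} (hr : 1 ≤ r) {a b c : ℝ} (ha : 0 ≤ a) (hab : a ≤ b) (hc : 0 ≤ c) :
    (a + c) ^ r - a ^ r ≤ (b + c) ^ r - b ^ r :=
  convex_diff_mono' (convexOn_rpow hr) ha hab hc

/-- Key induction inequality (induc2) in the proof of Theorem 1(b): with
`Ψ(N) = (∑_{k=1}^N w(k))^{n/p}` (so `Ψ(0)=0`), `w` positive decreasing, `0 < p ≤ n`,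
`1 ≤ n`, and `x` decreasing nonnegative (indexed from `1`),
`Ψ(1) x(1)^n + ∑_{i=2}^N (Ψ(i)-Ψ(i-1)) x(i)^n ≤ (∑_{k=1}^N w(k) x(k)^p)^{n/p}`. -/
theorem stmt7 (w : ℕ → ℝ) (hw : ∀ k, 0 < w k) (hwa : Antitone w)
    (p n : ℝ) (hp : 0 < p) (hpn : p ≤ n) (hn : 1 ≤ n)
    (Ψ : ℕ → ℝ) (hΨ : ∀ N, Ψ N = (∑ k ∈ Finset.Icc 1 N, w k) ^ (n / p))
    (x : ℕ → ℝ) (hx : Antitone x) (hx0 : ∀ k, 0 ≤ x k) :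
    ∀ N : ℕ, 1 ≤ N →
      Ψ 1 * x 1 ^ n + ∑ i ∈ Finset.Icc 2 N, (Ψ i - Ψ (i - 1)) * x i ^ n ≤
        (∑ k ∈ Finset.Icc 1 N, w k * x k ^ p) ^ (n / p) := by
  have hr : 1 ≤ n / p := (one_le_div hp).mpr hpn
  have hpn' : p * (n / p) = n := by field_simp
  intro N
  induction N with
  | zero => intro h; omega
  | succ N ih =>
    intro _
    rcases Nat.lt_or_ge N 1 with hN | hN
    · -- N = 0, so N+1 = 1
      interval_cases N
      simp only [hΨ 1, Finset.Icc_self, Finset.sum_singleton, show (2:ℕ) > 1 from by norm_num,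
        Finset.Icc_eq_empty_of_lt (by norm_num : (1:ℕ) < 2), Finset.sum_empty, add_zero]
      rw [Real.mul_rpow (hw 1).le (Real.rpow_nonneg (hx0 1) p),
        ← Real.rpow_mul (hx0 1), hpn']
    · have hih := ih hN
      have W_nonneg : (0:ℝ) ≤ ∑ k ∈ Icc 1 N, w k :=
        Finset.sum_nonneg fun k _ => (hw k).le
      have S_le : (∑ k ∈ Icc 1 N, w k) * x (N+1) ^ p ≤ ∑ k ∈ Icc 1 N, w k * x k ^ p := by
        rw [Finset.sum_mul]
        apply Finset.sum_le_sum
        intro k hk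
        have hk' : k ≤ N + 1 := by simp at hk; omega
        exact mul_le_mul_of_nonneg_left
          (Real.rpow_le_rpow (hx0 (N+1)) (hx hk') hp.le) (hw k).le
      have key : (Ψ (N+1) - Ψ N) * x (N+1) ^ n ≤
          (∑ k ∈ Icc 1 (N+1), w k * x k ^ p) ^ (n/p) -
          (∑ k ∈ Icc 1 N, w k * x k ^ p) ^ (n/p) := by
        have hc : (0:ℝ) ≤ x (N+1) ^ p := Real.rpow_nonneg (hx0 _) p
        set c := x (N+1) ^ p with hcdef
        have hmain := rpow_diff_mono hr
          (mul_nonneg W_nonneg hc) S_le (c := w (N+1) * c)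
          (mul_nonneg (hw _).le hc)
        have hxn : x (N+1) ^ n = c ^ (n/p) := by
          rw [hcdef, ← Real.rpow_mul (hx0 _), hpn']
        have hΨdiff : (Ψ (N+1) - Ψ N) * x (N+1) ^ n =
            ((∑ k ∈ Icc 1 N, w k) * c + w (N+1) * c) ^ (n/p) -
            ((∑ k ∈ Icc 1 N, w k) * c) ^ (n/p) := by
          rw [hΨ, hΨ, Finset.sum_Icc_succ_top (by omega : 1 ≤ N+1)]
          have e1 : (∑ k ∈ Icc 1 N, w k) * c + w (N+1) * c =
              ((∑ k ∈ Icc 1 N, w k) + w (N+1)) * c := by ring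
          rw [e1, Real.mul_rpow (add_nonneg W_nonneg (hw _).le) hc, Real.mul_rpow W_nonneg hc, hxn]
          ring
        rw [hΨdiff]
        have e2 : ∑ k ∈ Icc 1 (N+1), w k * x k ^ p =
            (∑ k ∈ Icc 1 N, w k * x k ^ p) + w (N+1) * c := by
          rw [Finset.sum_Icc_succ_top (by omega : 1 ≤ N+1)]
        rw [e2]
        exact hmain
      have lhs_split : Ψ 1 * x 1 ^ n + ∑ i ∈ Icc 2 (N+1), (Ψ i - Ψ (i-1)) * x i ^ n =
          (Ψ 1 * x 1 ^ n + ∑ i ∈ Icc 2 N, (Ψ i - Ψ (i-1)) * x i ^ n) +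
          (Ψ (N+1) - Ψ N) * x (N+1) ^ n := by
        rw [Finset.sum_Icc_succ_top (by omega : 2 ≤ N+1)]
        simp [add_assoc]
      rw [lhs_split]
      linarith
end

section
/- Let w be a decreasing positive sequence with w(1)=1, w(k)→0, ∑w(k)=∞, let 0 < p < n, and Ψ(N) = (∑_{k=1}^N w(k))^{n/p}. If α is a bounded complex sequence and C > 0 satisfies |∑ₖ α(k)x₁(k)⋯xₙ(k)| ≤ C·‖x₁‖_{d(w,p)}⋯‖xₙ‖_{d(w,p)} for all finitely supported x₁,…,xₙ, then for every N, ∑_{k=1}^N α*(k) ≤ C·Ψ(N), where α* is the decreasing rearrangement of |α|. -/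
/-!
Since `α*(k)` is an infimum, for every `ε > 0` one can choose greedily a set `J` of `N` indices
with `∑_{k<N} α*(k) ≤ ∑_{k ∈ J} |α(k)| + ε`, and unimodular `λ_k` with `α(k) λ_k^n = |α(k)|`.
Testing the bound on `x₁ = ⋯ = xₙ = ∑_{k ∈ J} λ_k e_k`, whose rearrangement is the indicator of
`{0, …, N-1}`, gives `∑_{k ∈ J} |α(k)| ≤ C (∑_{k<N} w(k))^{n/p}`.
-/

open Finset

/-- The decreasing rearrangement of (the moduli of) a bounded sequence:
`x*(k) = inf { sup_{j ∉ J} |x(j)| : J ⊆ ℕ, |J| ≤ k }` (0-indexed, so `dRear x 0 = sup |x|`). -/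
noncomputable def dRear (x : ℕ → ℂ) (k : ℕ) : ℝ :=
  sInf {s : ℝ | ∃ J : Finset ℕ, J.card ≤ k ∧ ∀ j ∉ J, ‖x j‖ ≤ s}

section DecreasingRearrangement

variable {x : ℕ → ℂ}

lemma zero_mem_lowerBounds_dRear (x : ℕ → ℂ) (k : ℕ) :
    0 ∈ lowerBounds {s : ℝ | ∃ J : Finset ℕ, J.card ≤ k ∧ ∀ j ∉ J, ‖x j‖ ≤ s} := by
  rintro s ⟨J, -, hJ⟩
  obtain ⟨j, hj⟩ := J.exists_notMem
  exact (norm_nonneg _).trans (hJ j hj)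

lemma dRear_nonneg (x : ℕ → ℂ) (k : ℕ) : 0 ≤ dRear x k :=
  Real.sInf_nonneg (zero_mem_lowerBounds_dRear x k)

lemma dRear_le {k : ℕ} {s : ℝ} (J : Finset ℕ) (hJ : J.card ≤ k) (hs : ∀ j ∉ J, ‖x j‖ ≤ s) :
    dRear x k ≤ s :=
  csInf_le ⟨0, zero_mem_lowerBounds_dRear x k⟩ ⟨J, hJ, hs⟩

lemma exists_notMem_dRear_lt_norm_add (x : ℕ → ℂ) {J : Finset ℕ} {k : ℕ} (hJ : J.card ≤ k) {ε : ℝ}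
    (hε : 0 < ε) : ∃ j ∉ J, dRear x k < ‖x j‖ + ε := by
  by_contra! h
  have := dRear_le (s := dRear x k - ε) J hJ fun j hj => by linarith [h j hj]
  linarith

lemma exists_card_eq_sum_dRear_le (x : ℕ → ℂ) (N : ℕ) {ε : ℝ} (hε : 0 < ε) :
    ∃ J : Finset ℕ, J.card = N ∧ ∑ k ∈ range N, dRear x k ≤ ∑ j ∈ J, ‖x j‖ + ε := by
  induction N generalizing ε with
  | zero => exact ⟨∅, rfl, by simpa using hε.le⟩
  | succ N ih =>
    obtain ⟨J, hJN, hJ⟩ := ih (half_pos hε)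
    obtain ⟨j, hjJ, hj⟩ := exists_notMem_dRear_lt_norm_add x hJN.le (half_pos hε)
    refine ⟨insert j J, by rw [card_insert_of_notMem hjJ, hJN], ?_⟩
    rw [sum_range_succ, sum_insert hjJ]
    linarith

lemma dRear_of_norm_eq_one {J : Finset ℕ} (h1 : ∀ j ∈ J, ‖x j‖ = 1) (h0 : ∀ j ∉ J, x j = 0)
    (k : ℕ) : dRear x k = if k < J.card then 1 else 0 := by
  have hle : ∀ j, ‖x j‖ ≤ 1 := fun j => by
    by_cases hj : j ∈ J
    · exact (h1 j hj).le
    · simp [h0 j hj]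
  split_ifs with hk
  · refine le_antisymm (dRear_le ∅ (Nat.zero_le _) fun j _ => hle j)
      (le_csInf ⟨1, ∅, Nat.zero_le _, fun j _ => hle j⟩ ?_)
    rintro s ⟨J', hJ', hs⟩
    obtain ⟨j, hjJ, hjJ'⟩ := exists_mem_notMem_of_card_lt_card (s := J') (t := J) (by omega)
    exact (h1 j hjJ).ge.trans (hs j hjJ')
  · exact le_antisymm (dRear_le J (not_lt.mp hk) fun j hj => by simp [h0 j hj])
      (dRear_nonneg x k)

lemma tsum_dRear_rpow_mul_of_norm_eq_one (w : ℕ → ℝ) {p : ℝ} (hp : p ≠ 0) {J : Finset ℕ}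
    (h1 : ∀ j ∈ J, ‖x j‖ = 1) (h0 : ∀ j ∉ J, x j = 0) :
    ∑' k, dRear x k ^ p * w k = ∑ k ∈ range J.card, w k := by
  have hterm : ∀ k, dRear x k ^ p * w k = if k < J.card then w k else 0 := fun k => by
    rw [dRear_of_norm_eq_one h1 h0]
    split_ifs <;> simp [Real.zero_rpow hp]
  simp_rw [hterm]
  rw [tsum_eq_sum (s := range J.card) fun k hk => if_neg (by simpa using hk)]
  exact sum_congr rfl fun k hk => if_pos (mem_range.mp hk)

end DecreasingRearrangement

lemma exists_norm_eq_one_mul_pow_eq_norm (z : ℂ) {n : ℕ} (hn : n ≠ 0) :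
    ∃ u : ℂ, ‖u‖ = 1 ∧ z * u ^ n = ‖z‖ := by
  refine ⟨Complex.exp (↑(-z.arg / n) * Complex.I), Complex.norm_exp_ofReal_mul_I _, ?_⟩
  have harg : (n : ℂ) * (↑(-z.arg / n) * Complex.I) = -(z.arg * Complex.I) := by
    push_cast
    field_simp
  rw [← Complex.exp_nat_mul, harg, Complex.exp_neg, ← div_eq_mul_inv, div_eq_iff
    (Complex.exp_ne_zero _), Complex.norm_mul_exp_arg_mul_I]

theorem stmt8_general (w : ℕ → ℝ) (hw : ∀ k, 0 < w k)
    (p : ℝ) (n : ℕ) (hp : 0 < p) (hpn : p < n)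
    (α : ℕ → ℂ) (C : ℝ)
    (hT : ∀ x : Fin n → ℕ → ℂ, (∀ i, (Function.support (x i)).Finite) →
      ‖∑' k, α k * ∏ i, x i k‖ ≤
        C * ∏ i, (∑' k, dRear (x i) k ^ p * w k) ^ (1 / p)) :
    ∀ N : ℕ, ∑ k ∈ Finset.range N, dRear α k ≤
      C * (∑ k ∈ Finset.range N, w k) ^ ((n : ℝ) / p) := by
  have hn : n ≠ 0 := (Nat.cast_pos.mp (hp.trans hpn)).ne'
  intro N
  refine le_of_forall_pos_le_add fun ε hε => ?_
  obtain ⟨J, rfl, hJ⟩ := exists_card_eq_sum_dRear_le α N hε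
  choose u hu1 hu using fun k => exists_norm_eq_one_mul_pow_eq_norm (α k) hn
  set y : ℕ → ℂ := fun k => if k ∈ J then u k else 0
  have hy1 : ∀ j ∈ J, ‖y j‖ = 1 := fun j hj => by simp [y, hj, hu1]
  have hy0 : ∀ j ∉ J, y j = 0 := fun j hj => if_neg hj
  have hform : ∑' k, α k * ∏ _i : Fin n, y k = ∑ j ∈ J, ‖α j‖ := by
    simp only [Fin.prod_const]
    rw [tsum_eq_sum fun k hk => by rw [hy0 k hk, zero_pow hn, mul_zero]]
    push_cast
    exact sum_congr rfl fun k hk => by rw [show y k = u k from if_pos hk, hu]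
  have hnorm : ∏ _i : Fin n, (∑' k, dRear y k ^ p * w k) ^ (1 / p)
      = (∑ k ∈ range J.card, w k) ^ ((n : ℝ) / p) := by
    rw [Fin.prod_const, tsum_dRear_rpow_mul_of_norm_eq_one w hp.ne' hy1 hy0,
      ← Real.rpow_mul_natCast (sum_nonneg fun k _ => (hw k).le), one_div_mul_eq_div]
  have key := hT (fun _ => y) fun _ =>
    J.finite_toSet.subset fun k hk => by_contra fun h => hk (hy0 k h)
  rw [hform, hnorm, Complex.norm_real, Real.norm_of_nonneg (sum_nonneg fun _ _ => norm_nonneg _)]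
    at key
  linarith

/-- Necessity in Theorem 1(b): if the diagonal `n`-linear form with coefficients `α` is
bounded by `C` on finitely supported sequences with respect to the Lorentz norm
`‖x‖_{d(w,p)} = (∑ x*(k)^p w(k))^{1/p}`, then `∑_{k<N} α*(k) ≤ C (∑_{k<N} w(k))^{n/p} = C Ψ(N)`
for every `N`. -/
theorem stmt8 (w : ℕ → ℝ) (hw : ∀ k, 0 < w k) (hwa : Antitone w) (hw1 : w 0 = 1)
    (hw0 : Filter.Tendsto w Filter.atTop (nhds 0)) (hwns : ¬ Summable w)
    (p : ℝ) (n : ℕ) (hp : 0 < p) (hpn : p < n)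
    (α : ℕ → ℂ) (hα : ∃ A : ℝ, ∀ k, ‖α k‖ ≤ A) (C : ℝ) (hC : 0 < C)
    (hT : ∀ x : Fin n → ℕ → ℂ, (∀ i, (Function.support (x i)).Finite) →
      ‖∑' k, α k * ∏ i, x i k‖ ≤
        C * ∏ i, (∑' k, dRear (x i) k ^ p * w k) ^ (1 / p)) :
    ∀ N : ℕ, ∑ k ∈ Finset.range N, dRear α k ≤
      C * (∑ k ∈ Finset.range N, w k) ^ ((n : ℝ) / p) :=
  stmt8_general w hw p n hp hpn α C hT
end

section
/- Let E be a symmetric Banach sequence space, α a bounded complex sequence and σ(k) = α(k)^{1/n} (a choice of n-th root coordinatewise in modulus, |σ(k)| = |α(k)|^{1/n}). Then the diagonal n-linear form Tα : Eⁿ → ℂ is bounded if and only if the diagonal operator D_σ : E → ℓⁿ, D_σ(x) = (σ(k)x(k))ₖ, is bounded, and ‖Tα‖ = ‖D_σ‖^n. -/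
/-- A symmetric Banach sequence space. -/
structure SymmBSS where
  mem : (ℕ → ℂ) → Prop
  nrm : (ℕ → ℂ) → ℝ
  nrm_nonneg : ∀ x, 0 ≤ nrm x
  solid : ∀ x y : ℕ → ℂ, (∀ k, ‖x k‖ ≤ ‖y k‖) → mem y → mem x ∧ nrm x ≤ nrm y
  symm : ∀ (x : ℕ → ℂ) (e : ℕ ≃ ℕ), mem x → mem (x ∘ e) ∧ nrm (x ∘ e) = nrm x
  add_mem : ∀ x y : ℕ → ℂ, mem x → mem y → mem (x + y) ∧ nrm (x + y) ≤ nrm x + nrm y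
  smul_mem : ∀ (c : ℂ) (x : ℕ → ℂ), mem x → mem (c • x) ∧ nrm (c • x) = ‖c‖ * nrm x
  mem_of_l1 : ∀ x : ℕ → ℂ, Summable (fun k => ‖x k‖) → mem x
  bdd_of_mem : ∀ x : ℕ → ℂ, mem x → BddAbove (Set.range fun k => ‖x k‖)

/-!
Choosing unimodular `λ k` with `σ k * λ k * x k = ‖σ k * x k‖` and testing `Tα` on the diagonal
`(λx, …, λx)` gives `∑ ‖σ k x k‖ⁿ = Tα(λx, …, λx) ≤ C ‖x‖ⁿ`, so `‖D_σ‖ⁿ ≤ ‖Tα‖`. Conversely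
`|α k| ∏ |x_i k| = ∏ |σ k x_i k|`, and Hölder's inequality for `n` sequences in `ℓⁿ` (from AM-GM
after normalising) gives `|Tα(x)| ≤ ∏ ‖D_σ x_i‖ₙ ≤ ‖D_σ‖ⁿ ∏ ‖x_i‖`. Hence the admissible constants
of `Tα` are exactly the `n`-th powers of those of `D_σ`. Summability comes for free from bounds
on finite truncations, which stay in `E` by solidity.
-/

open Finset

theorem prod_le_sum_pow_div {n : ℕ} (hn : n ≠ 0) (a : Fin n → ℝ) (ha : ∀ i, 0 ≤ a i) :
    ∏ i, a i ≤ (∑ i, a i ^ n) / n := by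
  have hn' : (n : ℝ) ≠ 0 := Nat.cast_ne_zero.mpr hn
  have amgm := Real.geom_mean_le_arith_mean_weighted univ (fun _ => (n : ℝ)⁻¹)
    (fun i => a i ^ n) (fun _ _ => by positivity) (by simp [hn'])
    (fun i _ => pow_nonneg (ha i) n)
  calc ∏ i, a i = ∏ i, (a i ^ n) ^ (n : ℝ)⁻¹ :=
        prod_congr rfl fun i _ => (Real.pow_rpow_inv_natCast (ha i) hn).symm
    _ ≤ ∑ i, (n : ℝ)⁻¹ * a i ^ n := amgm
    _ = (∑ i, a i ^ n) / n := by rw [← mul_sum, inv_mul_eq_div]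

section Hoelder

variable {ι : Type*} {n : ℕ} {f : Fin n → ι → ℝ}

theorem summable_prod_of_summable_pow (hn : n ≠ 0) (hf : ∀ i k, 0 ≤ f i k)
    (hsum : ∀ i, Summable fun k => f i k ^ n) : Summable fun k => ∏ i, f i k :=
  (summable_sum fun i _ => hsum i).div_const (n : ℝ) |>.of_nonneg_of_le
    (fun k => prod_nonneg fun i _ => hf i k) fun k => prod_le_sum_pow_div hn _ fun i => hf i k

theorem tsum_prod_le_one (hn : n ≠ 0) (hf : ∀ i k, 0 ≤ f i k)
    (hsum : ∀ i, Summable fun k => f i k ^ n) (hle : ∀ i, ∑' k, f i k ^ n ≤ 1) :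
    ∑' k, ∏ i, f i k ≤ 1 :=
  calc ∑' k, ∏ i, f i k ≤ ∑' k, (∑ i, f i k ^ n) / n :=
        (summable_prod_of_summable_pow hn hf hsum).tsum_le_tsum
          (fun k => prod_le_sum_pow_div hn _ fun i => hf i k)
          ((summable_sum fun i _ => hsum i).div_const _)
    _ = (∑ i, ∑' k, f i k ^ n) / n := by
        rw [tsum_div_const, Summable.tsum_finsetSum fun i _ => hsum i]
    _ ≤ (∑ _i : Fin n, (1 : ℝ)) / n := by gcongr with i; exact hle i
    _ = 1 := by simp [hn]

theorem tsum_prod_le_prod_of_tsum_pow_le (hn : n ≠ 0) (hf : ∀ i k, 0 ≤ f i k)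
    (hsum : ∀ i, Summable fun k => f i k ^ n) {b : Fin n → ℝ} (hb : ∀ i, 0 ≤ b i)
    (hle : ∀ i, ∑' k, f i k ^ n ≤ b i ^ n) : ∑' k, ∏ i, f i k ≤ ∏ i, b i := by
  by_cases hzero : ∃ j, b j = 0
  · obtain ⟨j, hj⟩ := hzero
    have hfj : ∀ k, f j k = 0 := fun k => by
      have := (hsum j).le_tsum k fun k' _ => pow_nonneg (hf j k') n
      exact pow_eq_zero_iff hn |>.mp <| le_antisymm (by simpa [hj, hn] using this.trans (hle j))
        (pow_nonneg (hf j k) n)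
    have hprod : ∀ k, ∏ i, f i k = 0 := fun k => prod_eq_zero (mem_univ j) (hfj k)
    simp [hprod, prod_eq_zero (mem_univ j) hj]
  push Not at hzero
  have hbpos : ∀ i, 0 < b i := fun i => (hb i).lt_of_ne' (hzero i)
  have hnormalized : ∑' k, ∏ i, f i k / b i ≤ 1 := by
    refine tsum_prod_le_one hn (fun i k => div_nonneg (hf i k) (hb i)) (fun i => ?_) fun i => ?_
    · simpa only [div_pow] using (hsum i).div_const _
    · simp only [div_pow, tsum_div_const]
      exact div_le_one_of_le₀ (hle i) (pow_nonneg (hb i) n)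
  calc ∑' k, ∏ i, f i k = (∏ i, b i) * ∑' k, ∏ i, f i k / b i := by
        rw [← tsum_mul_left]
        refine tsum_congr fun k => ?_
        rw [prod_div_distrib, mul_div_cancel₀ _ (prod_pos fun i _ => hbpos i).ne']
    _ ≤ ∏ i, b i := mul_le_of_le_one_right (prod_nonneg fun i _ => hb i) hnormalized

end Hoelder

theorem Real.sInf_eq_sInf_pow {S T : Set ℝ} {n : ℕ} (hn : n ≠ 0) (hS : ∀ c ∈ S, 0 ≤ c)
    (hT : ∀ c ∈ T, 0 ≤ c) (hST : ∀ c ∈ S, c ^ (n : ℝ)⁻¹ ∈ T) (hTS : ∀ c ∈ T, c ^ n ∈ S) :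
    sInf S = sInf T ^ n := by
  have himage : S = (· ^ n) '' T := by
    refine Set.Subset.antisymm
      (fun c hc => ⟨_, hST c hc, Real.rpow_inv_natCast_pow (hS c hc) hn⟩) ?_
    rintro _ ⟨c, hc, rfl⟩
    exact hTS c hc
  rcases T.eq_empty_or_nonempty with rfl | hne
  · simp [himage, hn]
  rw [himage]
  exact (MonotoneOn.map_csInf_of_continuousWithinAt (continuous_pow n).continuousWithinAt
    (fun a ha _ _ hab => pow_le_pow_left₀ (hT a ha) hab n) hne ⟨0, hT⟩).symm

theorem Complex.exists_norm_le_mul_eq_norm (s x : ℂ) : ∃ y : ℂ, ‖y‖ ≤ ‖x‖ ∧ s * y = ‖s * x‖ := by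
  by_cases h : s * x = 0
  · exact ⟨0, by simp, by simp [h]⟩
  have hnorm : ‖s * x‖ ≠ 0 := norm_ne_zero_iff.mpr h
  refine ⟨x * (starRingEnd ℂ (s * x) / ‖s * x‖), ?_, ?_⟩
  · rw [norm_mul, norm_div, Complex.norm_conj, Complex.norm_real, norm_norm, div_self hnorm,
      mul_one]
  · rw [← mul_assoc, mul_div_assoc', Complex.mul_conj, Complex.normSq_eq_norm_sq,
      Complex.ofReal_pow, sq, mul_div_assoc, div_self (Complex.ofReal_ne_zero.mpr hnorm), mul_one]

namespace SymmBSS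

variable (E : SymmBSS) {n : ℕ} {α σ : ℕ → ℂ} {C : ℝ}

theorem indicator_mem {x : ℕ → ℂ} (hx : E.mem x) (s : Set ℕ) :
    E.mem (s.indicator x) ∧ E.nrm (s.indicator x) ≤ E.nrm x :=
  E.solid _ _ (norm_indicator_le_norm_self x) hx

/-- `C` is an admissible constant for `Tα` (resp. for `D_σ : E → ℓⁿ` below); the norms of the
paper are the infima of admissible constants. -/
def IsDiagFormBound (n : ℕ) (α : ℕ → ℂ) (C : ℝ) : Prop :=
  0 ≤ C ∧ ∀ x : Fin n → ℕ → ℂ, (∀ i, E.mem (x i)) →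
    ‖∑' k, α k * ∏ i, x i k‖ ≤ C * ∏ i, E.nrm (x i)

def IsDiagOpBound (n : ℕ) (σ : ℕ → ℂ) (C : ℝ) : Prop :=
  0 ≤ C ∧ ∀ x : ℕ → ℂ, E.mem x →
    (∑' k, ‖σ k * x k‖ ^ (n : ℝ)) ^ (1 / (n : ℝ)) ≤ C * E.nrm x

variable {E}

theorem IsDiagFormBound.sum_norm_pow_le (hn : n ≠ 0) (hσ : ∀ k, σ k ^ n = α k)
    (hC : E.IsDiagFormBound n α C) {x : ℕ → ℂ} (hx : E.mem x) (u : Finset ℕ) :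
    ∑ k ∈ u, ‖σ k * x k‖ ^ n ≤ C * E.nrm x ^ n := by
  choose y hy_le hy_eq using fun k => Complex.exists_norm_le_mul_eq_norm (σ k) (x k)
  set z := (u : Set ℕ).indicator y
  have hz := E.solid z x (fun k => (norm_indicator_le_norm_self y k).trans (hy_le k)) hx
  have hdiag : ∑' k, α k * ∏ _i : Fin n, z k = ((∑ k ∈ u, ‖σ k * x k‖ ^ n : ℝ) : ℂ) := by
    rw [sum_eq_tsum_indicator, Complex.ofReal_tsum]
    refine tsum_congr fun k => ?_
    by_cases hk : k ∈ u <;> simp [z, hk, ← hσ, ← mul_pow, hy_eq, hn]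
  calc ∑ k ∈ u, ‖σ k * x k‖ ^ n = ‖∑' k, α k * ∏ _i : Fin n, z k‖ := by
        rw [hdiag, Complex.norm_real, Real.norm_of_nonneg (by positivity)]
    _ ≤ C * E.nrm z ^ n := by simpa using hC.2 (fun _ => z) fun _ => hz.1
    _ ≤ C * E.nrm x ^ n := by gcongr; exacts [hC.1, E.nrm_nonneg z, hz.2]

theorem IsDiagFormBound.summable (hn : n ≠ 0) (hσ : ∀ k, σ k ^ n = α k)
    (hC : E.IsDiagFormBound n α C) {x : ℕ → ℂ} (hx : E.mem x) :
    Summable fun k => ‖σ k * x k‖ ^ (n : ℝ) := by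
  simpa only [Real.rpow_natCast] using
    summable_of_sum_le (fun k => by positivity) (hC.sum_norm_pow_le hn hσ hx)

theorem IsDiagFormBound.isDiagOpBound_rpow (hn : n ≠ 0) (hσ : ∀ k, σ k ^ n = α k)
    (hC : E.IsDiagFormBound n α C) : E.IsDiagOpBound n σ (C ^ (n : ℝ)⁻¹) := by
  refine ⟨by have := hC.1; positivity, fun x hx => ?_⟩
  have htsum : ∑' k, ‖σ k * x k‖ ^ n ≤ C * E.nrm x ^ n :=
    Real.tsum_le_of_sum_le (fun k => by positivity) (hC.sum_norm_pow_le hn hσ hx)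
  have hnrm := E.nrm_nonneg x
  simp only [Real.rpow_natCast, one_div]
  calc (∑' k, ‖σ k * x k‖ ^ n) ^ (n : ℝ)⁻¹ ≤ (C * E.nrm x ^ n) ^ (n : ℝ)⁻¹ := by
        gcongr
    _ = C ^ (n : ℝ)⁻¹ * E.nrm x := by
        rw [Real.mul_rpow hC.1 (by positivity), Real.pow_rpow_inv_natCast hnrm hn]

theorem IsDiagOpBound.sum_norm_pow_le (hn : n ≠ 0) (hC : E.IsDiagOpBound n σ C) {x : ℕ → ℂ}
    (hx : E.mem x) (u : Finset ℕ) : ∑ k ∈ u, ‖σ k * x k‖ ^ n ≤ (C * E.nrm x) ^ n := by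
  set z := (u : Set ℕ).indicator x
  have hz := E.indicator_mem hx u
  have htrunc : ∑' k, ‖σ k * z k‖ ^ (n : ℝ) = ∑ k ∈ u, ‖σ k * x k‖ ^ n := by
    rw [sum_eq_tsum_indicator]
    refine tsum_congr fun k => ?_
    by_cases hk : k ∈ u <;> simp [z, hk, hn]
  have hbound := hC.2 z hz.1
  rw [htrunc, one_div, Real.rpow_inv_le_iff_of_pos (by positivity)
    (mul_nonneg hC.1 (E.nrm_nonneg z)) (by positivity), Real.rpow_natCast] at hbound
  exact hbound.trans (by gcongr; exacts [mul_nonneg hC.1 (E.nrm_nonneg z), hC.1, hz.2])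

theorem IsDiagOpBound.summable_and_tsum_le (hn : n ≠ 0) (hC : E.IsDiagOpBound n σ C)
    {x : ℕ → ℂ} (hx : E.mem x) :
    (Summable fun k => ‖σ k * x k‖ ^ n) ∧ ∑' k, ‖σ k * x k‖ ^ n ≤ (C * E.nrm x) ^ n :=
  ⟨summable_of_sum_le (fun k => by positivity) (hC.sum_norm_pow_le hn hx),
    Real.tsum_le_of_sum_le (fun k => by positivity) (hC.sum_norm_pow_le hn hx)⟩

theorem IsDiagOpBound.summable_and_norm_tsum_le (hn : n ≠ 0) (hσ : ∀ k, σ k ^ n = α k)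
    (hC : E.IsDiagOpBound n σ C) {x : Fin n → ℕ → ℂ} (hx : ∀ i, E.mem (x i)) :
    (Summable fun k => ‖α k‖ * ∏ i, ‖x i k‖) ∧
      ‖∑' k, α k * ∏ i, x i k‖ ≤ C ^ n * ∏ i, E.nrm (x i) := by
  have hfactor : ∀ k, ‖α k‖ * ∏ i, ‖x i k‖ = ∏ i, ‖σ k * x i k‖ := fun k => by
    simp [← hσ k, prod_mul_distrib]
  have hrow := fun i => hC.summable_and_tsum_le hn (hx i)
  have hsum : Summable fun k => ‖α k‖ * ∏ i, ‖x i k‖ := by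
    simpa only [hfactor] using summable_prod_of_summable_pow hn (fun _ _ => norm_nonneg _)
      fun i => (hrow i).1
  refine ⟨hsum, ?_⟩
  calc ‖∑' k, α k * ∏ i, x i k‖ ≤ ∑' k, ‖α k * ∏ i, x i k‖ :=
        norm_tsum_le_tsum_norm (by simpa only [norm_mul, norm_prod] using hsum)
    _ = ∑' k, ∏ i, ‖σ k * x i k‖ := tsum_congr fun k => by rw [norm_mul, norm_prod, hfactor]
    _ ≤ ∏ i, C * E.nrm (x i) :=
        tsum_prod_le_prod_of_tsum_pow_le hn (fun _ _ => norm_nonneg _) (fun i => (hrow i).1)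
          (fun i => mul_nonneg hC.1 (E.nrm_nonneg _)) fun i => (hrow i).2
    _ = C ^ n * ∏ i, E.nrm (x i) := by rw [prod_mul_distrib, Fin.prod_const]

theorem IsDiagOpBound.isDiagFormBound_pow (hn : n ≠ 0) (hσ : ∀ k, σ k ^ n = α k)
    (hC : E.IsDiagOpBound n σ C) : E.IsDiagFormBound n α (C ^ n) :=
  ⟨pow_nonneg hC.1 n, fun _ hx => (hC.summable_and_norm_tsum_le hn hσ hx).2⟩

end SymmBSS

theorem stmt10_general (E : SymmBSS) (n : ℕ) (hn : 0 < n) (α σ : ℕ → ℂ)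
    (hσ : ∀ k, σ k ^ n = α k) :
    ((∃ C : ℝ, 0 ≤ C ∧ ∀ x : Fin n → ℕ → ℂ, (∀ i, E.mem (x i)) →
        Summable (fun k => ‖α k‖ * ∏ i, ‖x i k‖) ∧
        ‖∑' k, α k * ∏ i, x i k‖ ≤ C * ∏ i, E.nrm (x i)) ↔
      (∃ C : ℝ, 0 ≤ C ∧ ∀ x : ℕ → ℂ, E.mem x →
        Summable (fun k => ‖σ k * x k‖ ^ (n : ℝ)) ∧
        (∑' k, ‖σ k * x k‖ ^ (n : ℝ)) ^ (1 / (n : ℝ)) ≤ C * E.nrm x))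
    ∧ sInf {C : ℝ | 0 ≤ C ∧ ∀ x : Fin n → ℕ → ℂ, (∀ i, E.mem (x i)) →
          ‖∑' k, α k * ∏ i, x i k‖ ≤ C * ∏ i, E.nrm (x i)}
      = (sInf {C : ℝ | 0 ≤ C ∧ ∀ x : ℕ → ℂ, E.mem x →
          (∑' k, ‖σ k * x k‖ ^ (n : ℝ)) ^ (1 / (n : ℝ)) ≤ C * E.nrm x}) ^ n := by
  have hn0 := hn.ne'
  refine ⟨⟨fun ⟨C, hC0, hC⟩ => ?_, fun ⟨C, hC0, hC⟩ => ?_⟩, ?_⟩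
  · have hform : E.IsDiagFormBound n α C := ⟨hC0, fun x hx => (hC x hx).2⟩
    have hop := hform.isDiagOpBound_rpow hn0 hσ
    exact ⟨_, hop.1, fun x hx => ⟨hform.summable hn0 hσ hx, hop.2 x hx⟩⟩
  · have hop : E.IsDiagOpBound n σ C := ⟨hC0, fun x hx => (hC x hx).2⟩
    exact ⟨C ^ n, pow_nonneg hC0 n, fun x hx => hop.summable_and_norm_tsum_le hn0 hσ hx⟩
  · exact Real.sInf_eq_sInf_pow hn0 (fun _ hC => hC.1) (fun _ hC => hC.1)
      (fun _ hC => SymmBSS.IsDiagFormBound.isDiagOpBound_rpow hn0 hσ hC)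
      (fun _ hC => SymmBSS.IsDiagOpBound.isDiagFormBound_pow hn0 hσ hC)

/-- `T_α` bounded (diagonal `n`-linear form on `E`) iff the diagonal operator
`D_σ : E → ℓⁿ`, `D_σ(x) = (σ(k)x(k))ₖ` with `σ` a coordinatewise `n`-th root of `α`, is
bounded; moreover `‖T_α‖ = ‖D_σ‖ⁿ` (norms expressed as infima of admissible constants). -/
theorem stmt10 (E : SymmBSS) (n : ℕ) (hn : 0 < n) (α σ : ℕ → ℂ)
    (hσ : ∀ k, σ k ^ n = α k) (hσmod : ∀ k, ‖σ k‖ = ‖α k‖ ^ (1 / (n : ℝ)))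
    (hα : BddAbove (Set.range fun k => ‖α k‖)) :
    ((∃ C : ℝ, 0 ≤ C ∧ ∀ x : Fin n → ℕ → ℂ, (∀ i, E.mem (x i)) →
        Summable (fun k => ‖α k‖ * ∏ i, ‖x i k‖) ∧
        ‖∑' k, α k * ∏ i, x i k‖ ≤ C * ∏ i, E.nrm (x i)) ↔
      (∃ C : ℝ, 0 ≤ C ∧ ∀ x : ℕ → ℂ, E.mem x →
        Summable (fun k => ‖σ k * x k‖ ^ (n : ℝ)) ∧
        (∑' k, ‖σ k * x k‖ ^ (n : ℝ)) ^ (1 / (n : ℝ)) ≤ C * E.nrm x))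
    ∧ sInf {C : ℝ | 0 ≤ C ∧ ∀ x : Fin n → ℕ → ℂ, (∀ i, E.mem (x i)) →
          ‖∑' k, α k * ∏ i, x i k‖ ≤ C * ∏ i, E.nrm (x i)}
      = (sInf {C : ℝ | 0 ≤ C ∧ ∀ x : ℕ → ℂ, E.mem x →
          (∑' k, ‖σ k * x k‖ ^ (n : ℝ)) ^ (1 / (n : ℝ)) ≤ C * E.nrm x}) ^ n :=
  stmt10_general E n hn α σ hσ
end
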